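/- For a matroid M and disjoint subsets Q, R of its ground set, and any element e ∈ E(M) − (Q ∪ R), either κ_{M\e}(Q,R) = κ_M(Q,R) or κ_{M/e}(Q,R) = κ_M(Q,R). -/

import Mathlib

open Set

variable {α : Type*}

/-- The rank of a set `X` in a matroid `M`: the supremum of cardinalities of
independent subsets of `X`. -/
noncomputable def Matroid.rk' (M : Matroid α) (X : Set α) : ℕ :=
  sSup {n | ∃ I, M.Indep I ∧ I ⊆ X ∧ I.ncard = n}

/-- The connectivity function `λ_M(X) = r(X) + r(E \ X) - r(M)`. -/
noncomputable def Matroid.lam (M : Matroid α) (X : Set α) : ℕ :=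
  M.rk' X + M.rk' (M.E \ X) - M.rk' M.E

/-- The connectivity `κ_M(Q,R)` between disjoint sets `Q` and `R`. -/
noncomputable def Matroid.kappa (M : Matroid α) (Q R : Set α) : ℕ :=
  sInf {k | ∃ X, Q ⊆ X ∧ X ⊆ M.E \ R ∧ M.lam X = k}

/-- Deletion of a set of elements. -/
def Matroid.del (M : Matroid α) (D : Set α) : Matroid α := M.restrict (M.E \ D)

/-- Contraction of a set of elements, defined via duality: `M / C = (M* \ C)*`. -/
def Matroid.con (M : Matroid α) (C : Set α) : Matroid α := (M✶.del C)✶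

/-- `N` is a minor of `M` if it is obtained by contracting a set `C` and deleting a
disjoint set `D`. -/
def Matroid.IsMinorOf (N M : Matroid α) : Prop :=
  ∃ C D, C ⊆ M.E ∧ D ⊆ M.E ∧ Disjoint C D ∧ N = (M.con C).del D

/-- `e` is deletable with respect to `(Q,R)`. -/
noncomputable def Matroid.Deletable (M : Matroid α) (Q R : Set α) (e : α) : Prop :=
  (M.del {e}).kappa Q R = M.kappa Q R

/-- `e` is contractible with respect to `(Q,R)`. -/
noncomputable def Matroid.Contractible (M : Matroid α) (Q R : Set α) (e : α) : Prop :=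
  (M.con {e}).kappa Q R = M.kappa Q R

/-- `e` is flexible with respect to `(Q,R)` if it is both deletable and contractible. -/
noncomputable def Matroid.Flexible (M : Matroid α) (Q R : Set α) (e : α) : Prop :=
  M.Deletable Q R e ∧ M.Contractible Q R e

/-- The local connectivity `⊓_M(A,B) = r(A) + r(B) - r(A ∪ B)`. -/
noncomputable def Matroid.localConn (M : Matroid α) (A B : Set α) : ℕ :=
  M.rk' A + M.rk' B - M.rk' (A ∪ B)

/-! Deleting or contracting elements never increases `κ`: for deletion this is two applications of
submodularity, and contraction reduces to deletion because `λ` is self-dual and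
`(M ／ C)✶ = M✶ ＼ C`. If both `κ_{M＼e}(Q,R)` and `κ_{M／e}(Q,R)` were smaller than `κ_M(Q,R)`,
take sets `X` and `Y` attaining them. Submodularity of the rank, applied to `X, Y ∪ {e}` and to
their complements, uncrosses them into
`λ_M(X ∩ Y) + λ_M(X ∪ Y ∪ {e}) ≤ λ_{M＼e}(X) + λ_{M／e}(Y) + r({e})`,
so `2 κ_M ≤ 2 (κ_M - 1) + 1`, which is absurd. -/

namespace Matroid

variable {M : Matroid α} {C D X Y Q R : Set α} {e : α}

lemma del_eq_delete (M : Matroid α) (D : Set α) : M.del D = M ＼ D := rfl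

lemma con_eq_contract (M : Matroid α) (C : Set α) : M.con C = M ／ C := rfl

lemma eRk_contract_add_eRk (M : Matroid α) (C X : Set α) :
    (M ／ C).eRk X + M.eRk C = M.eRk (X ∪ C) := by
  obtain ⟨I, hI⟩ := M.exists_isBasis' C
  obtain ⟨J, hJ, hIJ⟩ := hI.indep.subset_isBasis'_of_subset (hI.subset.trans subset_union_right)
  have hJC : I = J ∩ C :=
    hI.eq_of_subset_indep (hJ.indep.inter_right C) (subset_inter hIJ hI.subset) inter_subset_right
  have hcon : (M ／ C).IsBasis' (J \ C) ((X ∪ C) \ C) :=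
    hJ.contract_isBasis' hI (hJ.indep.subset (union_subset sdiff_subset hIJ))
  have hXC : (M ／ C).eRk ((X ∪ C) \ C) = (M ／ C).eRk X := by
    rw [← eRk_inter_ground, contract_ground, ← (M ／ C).eRk_inter_ground X, contract_ground]
    congr 1
    tauto_set
  rw [← hXC, hcon.eRk_eq_encard, hI.eRk_eq_encard, hJ.eRk_eq_encard, hJC,
    encard_sdiff_add_encard_inter]

lemma exists_lam_eq_kappa (hQ : Q ⊆ M.E) (hQR : Disjoint Q R) :
    ∃ X, Q ⊆ X ∧ X ⊆ M.E \ R ∧ M.lam X = M.kappa Q R :=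
  Nat.sInf_mem (s := {k | ∃ X, Q ⊆ X ∧ X ⊆ M.E \ R ∧ M.lam X = k})
    ⟨M.lam Q, Q, subset_rfl, Set.subset_sdiff.2 ⟨hQ, hQR⟩, rfl⟩

lemma kappa_le_lam (hQX : Q ⊆ X) (hXR : X ⊆ M.E \ R) : M.kappa Q R ≤ M.lam X :=
  Nat.sInf_le ⟨X, hQX, hXR, rfl⟩

section RankFinite

variable [M.RankFinite]

variable (M) in
lemma cast_rk'_eq_eRk (X : Set α) : (M.rk' X : ℕ∞) = M.eRk X := by
  obtain ⟨I, hI⟩ := M.exists_isBasis' X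
  have hIfin : I.Finite := hI.indep.finite
  have hmax : IsGreatest {n | ∃ J, M.Indep J ∧ J ⊆ X ∧ J.ncard = n} I.ncard := by
    refine ⟨⟨I, hI.indep, hI.subset, rfl⟩, ?_⟩
    rintro _ ⟨J, hJ, hJX, rfl⟩
    have hle := hJ.encard_le_eRk_of_subset hJX
    rw [← hI.encard_eq_eRk, ← hIfin.cast_ncard_eq, ← hJ.finite.cast_ncard_eq] at hle
    exact_mod_cast hle
  rw [rk', hmax.csSup_eq, hIfin.cast_ncard_eq, hI.encard_eq_eRk]

lemma rk'_mono (hXY : X ⊆ Y) : M.rk' X ≤ M.rk' Y := by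
  have := M.eRk_mono hXY
  rwa [← cast_rk'_eq_eRk, ← cast_rk'_eq_eRk, Nat.cast_le] at this

variable (M) in
lemma rk'_singleton_le (e : α) : M.rk' {e} ≤ 1 := by
  have := M.eRk_singleton_le e
  rwa [← cast_rk'_eq_eRk, Nat.cast_le_one] at this

variable (M) in
lemma rk'_inter_add_rk'_union_le (X Y : Set α) :
    M.rk' (X ∩ Y) + M.rk' (X ∪ Y) ≤ M.rk' X + M.rk' Y := by
  have := M.eRk_inter_add_eRk_union_le X Y
  simp only [← cast_rk'_eq_eRk] at this
  exact_mod_cast this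

variable (M) in
lemma rk'_union_le (X Y : Set α) : M.rk' (X ∪ Y) ≤ M.rk' X + M.rk' Y :=
  le_add_self.trans (M.rk'_inter_add_rk'_union_le X Y)

lemma rk'_restrict (hXR : X ⊆ R) : (M ↾ R).rk' X = M.rk' X := by
  have := M.restrict_eRk_eq hXR
  rwa [← cast_rk'_eq_eRk, ← cast_rk'_eq_eRk, Nat.cast_inj] at this

lemma rk'_contract_add_rk' (C X : Set α) : (M ／ C).rk' X + M.rk' C = M.rk' (X ∪ C) := by
  have := M.eRk_contract_add_eRk C X
  simp only [← cast_rk'_eq_eRk] at this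
  exact_mod_cast this

lemma lam_add_rk'_ground (X : Set α) : M.lam X + M.rk' M.E = M.rk' X + M.rk' (M.E \ X) := by
  have : M.rk' M.E ≤ M.rk' X + M.rk' (M.E \ X) :=
    (rk'_mono (by tauto_set)).trans (M.rk'_union_le X (M.E \ X))
  unfold lam
  omega

lemma lam_delete_add (hX : X ⊆ M.E \ D) :
    (M ＼ D).lam X + M.rk' (M.E \ D) = M.rk' X + M.rk' ((M.E \ D) \ X) := by
  have h := (M ＼ D).lam_add_rk'_ground X
  rwa [delete_ground, delete, rk'_restrict hX, rk'_restrict subset_rfl,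
    rk'_restrict sdiff_subset] at h

lemma lam_contract_add (hC : C ⊆ M.E) (hX : X ⊆ M.E \ C) :
    (M ／ C).lam X + M.rk' M.E + M.rk' C = M.rk' (X ∪ C) + M.rk' (M.E \ X) := by
  have h := (M ／ C).lam_add_rk'_ground X
  have hX' := M.rk'_contract_add_rk' C X
  have hE := M.rk'_contract_add_rk' C (M.E \ C)
  have hEX := M.rk'_contract_add_rk' C ((M.E \ C) \ X)
  rw [contract_ground] at h
  rw [sdiff_union_of_subset hC] at hE
  rw [show (M.E \ C) \ X ∪ C = M.E \ X by tauto_set] at hEX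
  omega

lemma lam_delete_le (hX : X ⊆ M.E) : (M ＼ D).lam (X \ D) ≤ M.lam X := by
  have hdel := lam_delete_add (M := M) (X := X \ D) (D := D) (sdiff_subset_sdiff_left hX)
  have hsub₁ := M.rk'_inter_add_rk'_union_le X (M.E \ D)
  have hsub₂ := M.rk'_inter_add_rk'_union_le (M.E \ X) (X ∪ M.E \ D)
  rw [show X ∩ (M.E \ D) = X \ D by tauto_set] at hsub₁
  rw [show M.E \ X ∩ (X ∪ M.E \ D) = (M.E \ D) \ (X \ D) by tauto_set,
    show M.E \ X ∪ (X ∪ M.E \ D) = M.E by tauto_set] at hsub₂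
  have := M.lam_add_rk'_ground X
  omega

lemma kappa_delete_le (hQ : Q ⊆ M.E) (hQR : Disjoint Q R) (hQD : Disjoint Q D) :
    (M ＼ D).kappa Q R ≤ M.kappa Q R := by
  obtain ⟨X, hQX, hXR, hX⟩ := exists_lam_eq_kappa hQ hQR
  have hXD : X \ D ⊆ (M ＼ D).E \ R := by
    rw [delete_ground]
    tauto_set
  exact hX ▸ (kappa_le_lam (Set.subset_sdiff.2 ⟨hQX, hQD⟩) hXD).trans
    (lam_delete_le (hXR.trans sdiff_subset))

lemma lam_inter_add_lam_insert_union_le (he : e ∈ M.E) (hX : X ⊆ M.E \ {e})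
    (hY : Y ⊆ M.E \ {e}) :
    M.lam (X ∩ Y) + M.lam (insert e (X ∪ Y)) ≤ (M ＼ {e}).lam X + (M ／ {e}).lam Y + 1 := by
  have he' : {e} ⊆ M.E := singleton_subset_iff.2 he
  have hdel := lam_delete_add hX
  have hcon := lam_contract_add he' hY
  have hsub₁ := M.rk'_inter_add_rk'_union_le X (Y ∪ {e})
  have hsub₂ := M.rk'_inter_add_rk'_union_le ((M.E \ {e}) \ X) (M.E \ Y)
  rw [show X ∩ (Y ∪ {e}) = X ∩ Y by tauto_set,
    show X ∪ (Y ∪ {e}) = insert e (X ∪ Y) by rw [insert_eq]; tauto_set] at hsub₁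
  rw [show (M.E \ {e}) \ X ∩ (M.E \ Y) = M.E \ insert e (X ∪ Y) by rw [insert_eq]; tauto_set,
    show (M.E \ {e}) \ X ∪ (M.E \ Y) = M.E \ (X ∩ Y) by tauto_set] at hsub₂
  have hinter := M.lam_add_rk'_ground (X ∩ Y)
  have hunion := M.lam_add_rk'_ground (insert e (X ∪ Y))
  have hrke := M.rk'_singleton_le e
  have hrkE : M.rk' (M.E \ {e}) ≤ M.rk' M.E := rk'_mono sdiff_subset
  omega

end RankFinite

section Finite

variable [M.Finite]

lemma rk'_dual_add_rk'_ground (hX : X ⊆ M.E) :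
    M✶.rk' X + M.rk' M.E = M.rk' (M.E \ X) + X.ncard := by
  have := M.eRk_dual_add_eRank X hX
  rw [← eRk_ground, ← (M.set_finite X hX).cast_ncard_eq] at this
  simp only [← cast_rk'_eq_eRk] at this
  exact_mod_cast this

lemma lam_dual (hX : X ⊆ M.E) : M✶.lam X = M.lam X := by
  have hX' := rk'_dual_add_rk'_ground hX
  have hXc := rk'_dual_add_rk'_ground (M := M) (X := M.E \ X) sdiff_subset
  have hE := rk'_dual_add_rk'_ground (M := M) (X := M.E) subset_rfl
  have hcard := ncard_sdiff_add_ncard_of_subset hX M.ground_finite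
  have hempty : M.rk' ∅ = 0 := by exact_mod_cast (M.cast_rk'_eq_eRk ∅).trans M.eRk_empty
  have hlam := M.lam_add_rk'_ground X
  have hlam' := M✶.lam_add_rk'_ground X
  rw [sdiff_sdiff_cancel_left hX] at hXc
  rw [sdiff_self, hempty] at hE
  rw [dual_ground] at hlam'
  omega

variable (M) in
lemma kappa_dual (Q R : Set α) : M✶.kappa Q R = M.kappa Q R := by
  simp only [kappa, dual_ground]
  congr 1
  ext k
  refine exists_congr fun X ↦ and_congr_right fun _ ↦ and_congr_right fun hXR ↦ ?_
  rw [lam_dual (hXR.trans sdiff_subset)]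

lemma kappa_contract_le (hQ : Q ⊆ M.E) (hQR : Disjoint Q R) (hQC : Disjoint Q C) :
    (M ／ C).kappa Q R ≤ M.kappa Q R := by
  rw [← kappa_dual, dual_contract, ← M.kappa_dual]
  exact kappa_delete_le hQ hQR hQC

end Finite

end Matroid

theorem stmt_0_general (M : Matroid α) [M.Finite] (Q R : Set α) (hQ : Q ⊆ M.E)
    (hQR : Disjoint Q R) (e : α) (he : e ∈ M.E \ (Q ∪ R)) :
    (M.del {e}).kappa Q R = M.kappa Q R ∨ (M.con {e}).kappa Q R = M.kappa Q R := by
  rw [Matroid.del_eq_delete, Matroid.con_eq_contract]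
  have heQ : Disjoint Q {e} := disjoint_singleton_right.2 fun h ↦ he.2 (Or.inl h)
  have hQe : Q ⊆ M.E \ {e} := Set.subset_sdiff.2 ⟨hQ, heQ⟩
  have hdel := Matroid.kappa_delete_le (R := R) hQ hQR heQ
  have hcon := Matroid.kappa_contract_le (R := R) hQ hQR heQ
  by_contra! hlt
  obtain ⟨X, hQX, hXR, hX⟩ := Matroid.exists_lam_eq_kappa (M := M.delete {e}) hQe hQR
  obtain ⟨Y, hQY, hYR, hY⟩ := Matroid.exists_lam_eq_kappa (M := M.contract {e}) hQe hQR
  rw [Matroid.delete_ground] at hXR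
  rw [Matroid.contract_ground] at hYR
  have hXR' : X ⊆ M.E \ R := hXR.trans (sdiff_subset_sdiff_left sdiff_subset)
  have hYR' : Y ⊆ M.E \ R := hYR.trans (sdiff_subset_sdiff_left sdiff_subset)
  have hmix := Matroid.lam_inter_add_lam_insert_union_le he.1 (hXR.trans sdiff_subset)
    (hYR.trans sdiff_subset)
  have hinter := Matroid.kappa_le_lam (subset_inter hQX hQY) (inter_subset_left.trans hXR')
  have hunion := Matroid.kappa_le_lam (hQX.trans (subset_union_left.trans (subset_insert e _)))
    (insert_subset ⟨he.1, fun h ↦ he.2 (Or.inr h)⟩ (union_subset hXR' hYR'))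
  omega

theorem stmt_0 (M : Matroid α) [M.Finite] (Q R : Set α) (hQ : Q ⊆ M.E) (hR : R ⊆ M.E)
    (hQR : Disjoint Q R) (e : α) (he : e ∈ M.E \ (Q ∪ R)) :
    (M.del {e}).kappa Q R = M.kappa Q R ∨ (M.con {e}).kappa Q R = M.kappa Q R :=
  stmt_0_general M Q R hQ hQR e he
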